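/- arXiv:2604.21329 — 2 statements merged into one kernel-verified Lean document; each statement's English description precedes it below -/
import Mathlib

section
/- Let M be the mn × mn block companion matrix with m×m block structure: M has identity blocks I_n on the first superdiagonal of blocks, bottom block row (−γ₀L, −γ₁L, …, −γ_{m−1}L), and zeros elsewhere. Then det(λ I_{mn} − M) = Π_{i=1}^{n} (λ^m − Σ_{k=0}^{m−1} γ_k μ_i λ^k), where μ₁,…,μ_n are the eigenvalues of −L (counted with multiplicity). -/
/-!
All blocks of `λ • 1 - M` are polynomials in `L`: it is the image, under `X ↦ L`, of an `m × m`
matrix over `ℂ[X]`, namely `λ • 1` minus the companion matrix of `Y ^ m + ∑ γ_k X Y ^ k`.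
By Silvester's theorem on block matrices with commuting blocks, `det (λ • 1 - M)` is the
determinant of the image of the `ℂ[X]`-determinant of that matrix, which Laplace expansion
computes as `λ ^ m + (∑ γ_k λ ^ k) X`. So `det (λ • 1 - M) = det (λ ^ m • 1 - c • (-L))` with
`c = ∑ γ_k λ ^ k`, and the characteristic polynomial of `-L` evaluates this as
`∏ (λ ^ m - c μ_i)`.
-/

/-- Block companion matrix of the `m`-th order consensus dynamics: identity blocks on the
first block superdiagonal and bottom block row `(-γ₀ L, …, -γ_{m-1} L)`. -/
def consensusMatrix (m n : ℕ) (γ : ℕ → ℂ) (L : Matrix (Fin n) (Fin n) ℂ) :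
    Matrix (Fin m × Fin n) (Fin m × Fin n) ℂ :=
  fun p q =>
    if p.1.val + 1 = q.1.val then (if p.2 = q.2 then 1 else 0)
    else if p.1.val = m - 1 then -γ q.1.val * L p.2 q.2
    else 0

open Matrix Polynomial Finset

namespace Matrix

variable {R : Type*} [CommRing R]

/-- `t • 1 - C`, where `C` is the companion matrix of `X ^ m + ∑ k < m, a k * X ^ k`
(ones on the superdiagonal, last row `-a`). -/
def companionPencil (m : ℕ) (t : R) (a : ℕ → R) : Matrix (Fin m) (Fin m) R :=
  of fun i j => (if i = j then t else 0) - (if (i : ℕ) + 1 = j then 1 else 0) +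
    (if (i : ℕ) + 1 = m then a j else 0)

lemma companionPencil_submatrix_succ_succ (m : ℕ) (t : R) (a : ℕ → R) :
    (companionPencil (m + 1) t a).submatrix Fin.succ Fin.succ =
      companionPencil m t (fun k => a (k + 1)) := by
  ext i j
  simp [companionPencil, Fin.succ_inj]

lemma det_companionPencil_submatrix_castSucc_succ (m : ℕ) (t : R) (a : ℕ → R) :
    ((companionPencil (m + 1) t a).submatrix Fin.castSucc Fin.succ).det = (-1) ^ m := by
  rw [det_of_isLowerTriangular]
  · simp [companionPencil, Fin.ext_iff, fun i : Fin m => i.isLt.ne]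
  · intro i j (hij : i < j)
    have := i.isLt
    simp only [companionPencil, submatrix_apply, of_apply, Fin.ext_iff, Fin.val_castSucc,
      Fin.val_succ, Nat.add_right_cancel_iff]
    rw [if_neg (by omega), if_neg (by omega), if_neg (by omega), sub_zero, add_zero]

theorem det_companionPencil (m : ℕ) (t : R) (a : ℕ → R) :
    (companionPencil m t a).det = t ^ m + ∑ k ∈ range m, a k * t ^ k := by
  induction m generalizing a with
  | zero => simp
  | succ m ih =>
    have hcol : ∀ i, companionPencil (m + 1) t a i 0 =
        (if i = 0 then t else 0) + (if i = Fin.last m then a 0 else 0) := by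
      intro i
      simp only [companionPencil, of_apply, Fin.val_zero, Nat.add_one_ne_zero, if_false,
        sub_zero, Fin.ext_iff, Fin.val_last, Nat.add_right_cancel_iff]
      congr
    have hsign : (-1 : R) ^ m * (-1) ^ m = 1 := by rw [← mul_pow]; simp
    have hshift : t * ∑ k ∈ range m, a (k + 1) * t ^ k =
        ∑ k ∈ range m, a (k + 1) * t ^ (k + 1) := by
      rw [mul_sum]
      exact sum_congr rfl fun k _ => by ring
    simp only [det_succ_column_zero, hcol, mul_add, add_mul, sum_add_distrib, mul_ite, ite_mul,
      mul_zero, zero_mul, sum_ite_eq', mem_univ, if_true, Fin.succAbove_zero,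
      Fin.succAbove_last, companionPencil_submatrix_succ_succ,
      det_companionPencil_submatrix_castSucc_succ, ih, Fin.val_zero, Fin.val_last,
      sum_range_succ']
    linear_combination a 0 * hsign + hshift

theorem det_smul_one_sub_smul_of_charpoly_eq_prod {K n : Type*} [Field K] [Fintype n]
    [DecidableEq n] (A : Matrix n n K) (μ : n → K) (hA : A.charpoly = ∏ i, (X - C (μ i)))
    (x c : K) : (x • 1 - c • A).det = ∏ i, (x - c * μ i) := by
  rcases eq_or_ne c 0 with rfl | hc
  · simp
  · have hscale : x • 1 - c • A = c • (scalar n (x / c) - A) := by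
      rw [smul_sub, scalar_apply, ← smul_one_eq_diagonal, smul_smul, mul_div_cancel₀ x hc]
    rw [hscale, det_smul, ← eval_charpoly, hA, eval_prod, Fintype.card, ← prod_const,
      ← prod_mul_distrib]
    refine prod_congr rfl fun i _ => ?_
    simp only [eval_sub, eval_X, eval_C]
    field_simp

end Matrix

lemma smul_one_sub_consensusMatrix_eq_comp (m n : ℕ) (γ : ℕ → ℂ) (L : Matrix (Fin n) (Fin n) ℂ)
    (lam : ℂ) :
    lam • 1 - consensusMatrix m n γ L = comp _ _ _ _ _
      ((companionPencil m (C lam) fun k => C (γ k) * X).map (aeval L).toRingHom) := by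
  ext ⟨i, a⟩ ⟨j, b⟩
  have hj := j.isLt
  have hlast : (i : ℕ) = m - 1 ↔ (i : ℕ) + 1 = m := by omega
  simp only [consensusMatrix, companionPencil, hlast, comp_apply, map_apply, of_apply,
    Matrix.sub_apply, Matrix.smul_apply, one_apply, Prod.ext_iff]
  split_ifs <;> first
    | (exfalso; omega)
    | simp_all [Fin.ext_iff, algebraMap_eq_diagonal, diagonal_apply, one_apply]

theorem stmt_8_general (m n : ℕ) (γ : ℕ → ℂ) (L : Matrix (Fin n) (Fin n) ℂ)
    (μ : Fin n → ℂ)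
    (hμ : (-L).charpoly = ∏ i, (Polynomial.X - Polynomial.C (μ i))) (lam : ℂ) :
    (lam • (1 : Matrix (Fin m × Fin n) (Fin m × Fin n) ℂ) - consensusMatrix m n γ L).det =
      ∏ i, (lam ^ m - ∑ k ∈ Finset.range m, γ k * μ i * lam ^ k) := by
  set c := ∑ k ∈ range m, γ k * lam ^ k
  have hdet : C lam ^ m + ∑ k ∈ range m, C (γ k) * X * C lam ^ k = C (lam ^ m) - c • -X := by
    rw [smul_neg, sub_neg_eq_add, map_pow, sum_smul]
    exact congrArg _ (sum_congr rfl fun k _ => by rw [← C_mul', map_mul, map_pow]; ring)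
  rw [smul_one_sub_consensusMatrix_eq_comp, ← det_det _ (aeval (R := ℂ) L).toRingHom,
    det_companionPencil, hdet]
  have hL : (aeval L).toRingHom (C (lam ^ m) - c • -X) = lam ^ m • 1 - c • -L := by
    simp [Algebra.algebraMap_eq_smul_one, _root_.smul_pow]
  rw [hL, det_smul_one_sub_smul_of_charpoly_eq_prod _ μ hμ]
  refine prod_congr rfl fun i _ => ?_
  rw [sum_mul]
  exact congrArg _ (sum_congr rfl fun k _ => by ring)

theorem stmt_8 (m n : ℕ) (hm : 1 ≤ m) (γ : ℕ → ℂ) (L : Matrix (Fin n) (Fin n) ℂ)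
    (μ : Fin n → ℂ)
    (hμ : (-L).charpoly = ∏ i, (Polynomial.X - Polynomial.C (μ i))) (lam : ℂ) :
    (lam • (1 : Matrix (Fin m × Fin n) (Fin m × Fin n) ℂ) - consensusMatrix m n γ L).det =
      ∏ i, (lam ^ m - ∑ k ∈ Finset.range m, γ k * μ i * lam ^ k) :=
  stmt_8_general m n γ L μ hμ lam
end

section
/- Let x₄ + p x² + q ≥ 0 be required for all real x, with q ≥ 0. This holds if and only if p ≥ −2√q. Consequently, the second-order protocol satisfies sup_ω |Φ₂(jω)| ≤ 1 if and only if a²r²γ₁² − 2arγ₀ − a²γ₁² ≥ −2aγ₀√(r² − 1). -/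
/-!
Substituting `t = x²`, the quartic is nonnegative on `ℝ` iff the quadratic `t² + p t + q` is
nonnegative on `[0, ∞)`. If `p ≥ -2√q` then `t² + p t + q ≥ (t - √q)²` there; otherwise its
vertex `t = -p/2` is nonnegative and the value there, `q - p²/4`, is negative.

For `Φ₂(s) = a (γ₁ s + γ₀) / (s² + a r (γ₁ s + γ₀))`, the bound `|Φ₂(jω)| ≤ 1` says
`|den|² - |num|² ≥ 0`, and this difference is the even quartic
`ω⁴ + (a²r²γ₁² - 2arγ₀ - a²γ₁²) ω² + a²γ₀²(r² - 1)` in `ω`.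
-/

open Complex

theorem quadratic_nonneg_on_Ici_iff {p q : ℝ} (hq : 0 ≤ q) :
    (∀ t : ℝ, 0 ≤ t → t ^ 2 + p * t + q ≥ 0) ↔ p ≥ -2 * √q := by
  constructor
  · intro h
    by_contra! hp
    have hvertex : √q < -p / 2 := by linarith
    have hvertex_pos : 0 < -p / 2 := (Real.sqrt_nonneg q).trans_lt hvertex
    have hvalue : q < (-p / 2) ^ 2 := (Real.sqrt_lt' hvertex_pos).1 hvertex
    have hnonneg := h (-p / 2) hvertex_pos.le
    nlinarith
  · intro hp t ht
    calc t ^ 2 + p * t + q ≥ t ^ 2 - 2 * √q * t + q := by nlinarith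
      _ = (t - √q) ^ 2 := by linear_combination -Real.sq_sqrt hq
      _ ≥ 0 := sq_nonneg _

theorem biquadratic_nonneg_iff {p q : ℝ} (hq : 0 ≤ q) :
    (∀ x : ℝ, x ^ 4 + p * x ^ 2 + q ≥ 0) ↔ p ≥ -2 * √q := by
  rw [← quadratic_nonneg_on_Ici_iff hq]
  constructor
  · intro h t ht
    have h4 : √t ^ 4 = t ^ 2 := by rw [show 4 = 2 * 2 from rfl, pow_mul, Real.sq_sqrt ht]
    simpa [h4, Real.sq_sqrt ht] using h √t
  · intro h x
    simpa [← pow_mul] using h (x ^ 2) (sq_nonneg x)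

theorem Complex.norm_div_le_one_iff_normSq_le {z w : ℂ} (hw : w ≠ 0) :
    ‖z / w‖ ≤ 1 ↔ normSq z ≤ normSq w := by
  rw [norm_div, div_le_one (norm_pos_iff.2 hw), normSq_eq_norm_sq, normSq_eq_norm_sq,
    sq_le_sq₀ (norm_nonneg z) (norm_nonneg w)]

section SecondOrderProtocol

variable (a γ₀ γ₁ r ω : ℝ)

theorem normSq_protocol_num :
    normSq ((a : ℂ) * ((γ₁ : ℂ) * (I * ω) + γ₀)) = (a * γ₀) ^ 2 + (a * γ₁ * ω) ^ 2 := by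
  rw [show (a : ℂ) * ((γ₁ : ℂ) * (I * ω) + γ₀) = ((a * γ₀ : ℝ) : ℂ) + ((a * γ₁ * ω : ℝ) : ℂ) * I by
    push_cast; ring, normSq_add_mul_I]

theorem normSq_protocol_den :
    normSq ((I * ω) ^ 2 + (a : ℂ) * (r : ℂ) * ((γ₁ : ℂ) * (I * ω) + γ₀)) =
      (a * r * γ₀ - ω ^ 2) ^ 2 + (a * r * γ₁ * ω) ^ 2 := by
  rw [show (I * ω) ^ 2 + (a : ℂ) * (r : ℂ) * ((γ₁ : ℂ) * (I * ω) + γ₀) =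
      ((a * r * γ₀ - ω ^ 2 : ℝ) : ℂ) + ((a * r * γ₁ * ω : ℝ) : ℂ) * I by
    push_cast; ring_nf; rw [I_sq]; ring, normSq_add_mul_I]

theorem norm_protocol_le_one_iff
    (hden : 0 < (a * r * γ₀ - ω ^ 2) ^ 2 + (a * r * γ₁ * ω) ^ 2) :
    ‖(a : ℂ) * ((γ₁ : ℂ) * (I * ω) + γ₀) /
        ((I * ω) ^ 2 + (a : ℂ) * (r : ℂ) * ((γ₁ : ℂ) * (I * ω) + γ₀))‖ ≤ 1 ↔
      ω ^ 4 + (a ^ 2 * r ^ 2 * γ₁ ^ 2 - 2 * a * r * γ₀ - a ^ 2 * γ₁ ^ 2) * ω ^ 2 +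
        (a * γ₀) ^ 2 * (r ^ 2 - 1) ≥ 0 := by
  have hden_ne : (I * ω) ^ 2 + (a : ℂ) * (r : ℂ) * ((γ₁ : ℂ) * (I * ω) + γ₀) ≠ 0 := by
    rw [← normSq_pos, normSq_protocol_den]
    exact hden
  rw [norm_div_le_one_iff_normSq_le hden_ne, normSq_protocol_num, normSq_protocol_den,
    ← sub_nonneg]
  constructor <;> intro h <;> linarith

end SecondOrderProtocol

theorem stmt_14_general (a γ₀ γ₁ r : ℝ) (ha : 0 < a) (h0 : 0 < γ₀) (hr : 1 ≤ r)
    (hden : ∀ ω : ℝ, 0 < (a * r * γ₀ - ω ^ 2) ^ 2 + (a * r * γ₁ * ω) ^ 2) :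
    (∀ p q : ℝ, 0 ≤ q →
        ((∀ x : ℝ, x ^ 4 + p * x ^ 2 + q ≥ 0) ↔ p ≥ -2 * Real.sqrt q)) ∧
    ((∀ ω : ℝ,
        ‖
          (a : ℂ) * ((γ₁ : ℂ) * (Complex.I * ω) + γ₀) /
            ((Complex.I * ω) ^ 2 + (a : ℂ) * (r : ℂ) * ((γ₁ : ℂ) * (Complex.I * ω) + γ₀))‖ ≤ 1) ↔
      a ^ 2 * r ^ 2 * γ₁ ^ 2 - 2 * a * r * γ₀ - a ^ 2 * γ₁ ^ 2 ≥
        -2 * a * γ₀ * Real.sqrt (r ^ 2 - 1)) := by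
  refine ⟨fun p q hq => biquadratic_nonneg_iff hq, ?_⟩
  have hr2 : 0 ≤ r ^ 2 - 1 := by nlinarith
  have hsqrt : √((a * γ₀) ^ 2 * (r ^ 2 - 1)) = a * γ₀ * √(r ^ 2 - 1) := by
    rw [Real.sqrt_mul (sq_nonneg _), Real.sqrt_sq (by positivity)]
  rw [forall_congr' fun ω => norm_protocol_le_one_iff a γ₀ γ₁ r ω (hden ω),
    biquadratic_nonneg_iff (by positivity), hsqrt, ← mul_assoc, ← mul_assoc]

theorem stmt_14 (a γ₀ γ₁ r : ℝ) (ha : 0 < a) (h0 : 0 < γ₀) (h1 : 0 < γ₁) (hr : 1 ≤ r)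
    (hden : ∀ ω : ℝ, 0 < (a * r * γ₀ - ω ^ 2) ^ 2 + (a * r * γ₁ * ω) ^ 2) :
    (∀ p q : ℝ, 0 ≤ q →
        ((∀ x : ℝ, x ^ 4 + p * x ^ 2 + q ≥ 0) ↔ p ≥ -2 * Real.sqrt q)) ∧
    ((∀ ω : ℝ,
        ‖
          (a : ℂ) * ((γ₁ : ℂ) * (Complex.I * ω) + γ₀) /
            ((Complex.I * ω) ^ 2 + (a : ℂ) * (r : ℂ) * ((γ₁ : ℂ) * (Complex.I * ω) + γ₀))‖ ≤ 1) ↔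
      a ^ 2 * r ^ 2 * γ₁ ^ 2 - 2 * a * r * γ₀ - a ^ 2 * γ₁ ^ 2 ≥
        -2 * a * γ₀ * Real.sqrt (r ^ 2 - 1)) :=
  stmt_14_general a γ₀ γ₁ r ha h0 hr hden
end
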